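/- The embedding i : S_QM → L_QM preserves binary meets: for all (𝒜₁, P₁), (𝒜₂, P₂) ∈ S_QM, i(𝒜₁, P₁) ∧ i(𝒜₂, P₂) = i((𝒜₁, P₁) ∧ (𝒜₂, P₂)), where the meet on the left is the pointwise meet in L_QM and the meet on the right is the meet in S_QM. -/

import Mathlib

open scoped ENNReal

variable (H : Type*) [NormedAddCommGroup H] [InnerProductSpace ℂ H] [CompleteSpace H]

/-- An orthogonal projection on the Hilbert space `H`, i.e. an element of `L(ℋ)`. -/
def IsProj (P : H →L[ℂ] H) : Prop := IsIdempotentElem P ∧ IsSelfAdjoint P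

/-- The lattice order on projections: `P ≤ Q` iff `P * Q = P`. -/
def pleq (P Q : H →L[ℂ] H) : Prop := P * Q = P

/-- An abelian (commutative) von Neumann algebra. -/
def IsAbelianAlg (A : VonNeumannAlgebra H) : Prop :=
  ∀ x ∈ A, ∀ y ∈ A, x * y = y * x
/-- An element of `S_QM`: a pair `(𝒜, P)` of an abelian von Neumann algebra `𝒜` and a
projection `P ∈ 𝒜`.  Pairs with `proj = 0` all represent the bottom element `⊥`. -/
structure SQM where
  alg : VonNeumannAlgebra H
  proj : H →L[ℂ] H
  abelian : IsAbelianAlg H alg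
  isProj : IsProj H proj
  mem : proj ∈ alg

/-- The order on `S_QM`: `(𝒜₁,P₁) ≤ (𝒜₂,P₂)` iff `P₁ = 0` or (`𝒜₁ ⊇ 𝒜₂` and `P₁ ≤ P₂`). -/
def SQMle (a b : SQM H) : Prop :=
  a.proj = 0 ∨ (b.alg ≤ a.alg ∧ pleq H a.proj b.proj)
/-- The collection `𝔄` of abelian von Neumann subalgebras of `B(H)`. -/
def AbAlg := {A : VonNeumannAlgebra H // IsAbelianAlg H A}
/-- The lattice `L_QM`: monotone functions `S : 𝔄 → L(ℋ)` with `S(𝒜) ∈ L(𝒜)`. -/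
structure LQM where
  S : AbAlg H → (H →L[ℂ] H)
  isProj : ∀ A : AbAlg H, IsProj H (S A)
  mem : ∀ A : AbAlg H, S A ∈ A.1
  mono : ∀ A B : AbAlg H, A.1 ≤ B.1 → pleq H (S A) (S B)

/-- `L_QM` carries the pointwise partial order. -/
instance : PartialOrder (LQM H) where
  le S₁ S₂ := ∀ A : AbAlg H, pleq H (S₁.S A) (S₂.S A)
  le_refl S A := (S.isProj A).1
  le_trans S₁ S₂ S₃ h12 h23 A := by
    show S₁.S A * S₃.S A = S₁.S A
    calc S₁.S A * S₃.S A = S₁.S A * S₂.S A * S₃.S A := by rw [h12 A]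
      _ = S₁.S A * (S₂.S A * S₃.S A) := mul_assoc _ _ _
      _ = S₁.S A := by rw [h23 A, h12 A]
  le_antisymm S₁ S₂ h12 h21 := by
    have hS : S₁.S = S₂.S := funext fun A => by
      have hc : S₁.S A * S₂.S A = S₂.S A * S₁.S A :=
        A.2 _ (S₁.mem A) _ (S₂.mem A)
      calc S₁.S A = S₁.S A * S₂.S A := (h12 A).symm
        _ = S₂.S A * S₁.S A := hc
        _ = S₂.S A := h21 A
    cases S₁; cases S₂; cases hS; rfl

theorem LQM.le_def (S₁ S₂ : LQM H) :
    S₁ ≤ S₂ ↔ ∀ A : AbAlg H, pleq H (S₁.S A) (S₂.S A) := Iff.rfl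
open Classical in
/-- The embedding `i : S_QM → L_QM`, `i(𝒜,P)(𝒜') = P` if `𝒜 ⊆ 𝒜'` and `0` otherwise. -/
noncomputable def iEmb (a : SQM H) : LQM H where
  S B := if a.alg ≤ B.1 then a.proj else 0
  isProj B := by
    split_ifs
    · exact a.isProj
    · exact ⟨by simp [IsIdempotentElem], by simp [IsSelfAdjoint]⟩
  mem B := by
    split_ifs with h
    · exact h a.mem
    · exact zero_mem B.1
  mono A B hAB := by
    show (if a.alg ≤ A.1 then a.proj else 0) * (if a.alg ≤ B.1 then a.proj else 0)
        = (if a.alg ≤ A.1 then a.proj else 0)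
    split_ifs with h1 h2
    · exact a.isProj.1
    · exact absurd (h1.trans hAB) h2
    · exact zero_mul _
    · exact zero_mul _

/-
A lower bound `S` of `i(𝒜,P)` in `L_QM` is determined pointwise: `S ≤ i(𝒜,P)` holds iff, for
every abelian algebra `ℬ`, the pair `(ℬ, S(ℬ))` lies below `(𝒜,P)` in `S_QM`. Hence the lower
bounds of `i(𝒜₁,P₁)` and `i(𝒜₂,P₂)` are exactly those of `i((𝒜₁,P₁) ∧ (𝒜₂,P₂))`, which is
itself one of them since `i` is monotone.
-/

lemma mul_ite_zero_eq_self_iff {M : Type*} [MulZeroClass M] (P Q : M) (p : Prop) [Decidable p] :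
    P * (if p then Q else 0) = P ↔ P = 0 ∨ (p ∧ P * Q = P) := by
  by_cases hp : p
  · simp only [hp, if_true, true_and]
    exact ⟨Or.inr, by rintro (rfl | h) <;> simp [*]⟩
  · simp [hp, eq_comm]

lemma SQMle_refl (x : SQM H) : SQMle H x x :=
  Or.inr ⟨le_rfl, x.isProj.1⟩

def LQM.toSQM (S : LQM H) (B : AbAlg H) : SQM H :=
  ⟨B.1, S.S B, B.2, S.isProj B, S.mem B⟩

lemma le_iEmb_iff (S : LQM H) (a : SQM H) :
    S ≤ iEmb H a ↔ ∀ B : AbAlg H, SQMle H (S.toSQM H B) a :=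
  forall_congr' fun B => by
    classical exact mul_ite_zero_eq_self_iff (S.S B) a.proj (a.alg ≤ B.1)

lemma iEmb_mono {x y : SQM H} (h : SQMle H x y) : iEmb H x ≤ iEmb H y := by
  refine (le_iEmb_iff H _ y).2 fun B => ?_
  classical
  show (if x.alg ≤ B.1 then x.proj else 0) = 0 ∨
    (y.alg ≤ B.1 ∧ pleq H (if x.alg ≤ B.1 then x.proj else 0) y.proj)
  by_cases hB : x.alg ≤ B.1
  · rw [if_pos hB]
    rcases h with h0 | ⟨hle, hp⟩
    exacts [Or.inl h0, Or.inr ⟨hle.trans hB, hp⟩]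
  · exact Or.inl (if_neg hB)

lemma isGLB_iEmb_pair {a b m : SQM H}
    (hm : ∀ x : SQM H, SQMle H x m ↔ (SQMle H x a ∧ SQMle H x b)) :
    IsGLB {iEmb H a, iEmb H b} (iEmb H m) := by
  obtain ⟨hma, hmb⟩ := (hm m).1 (SQMle_refl H m)
  refine ⟨?_, fun S hS => ?_⟩
  · rintro S (rfl | rfl)
    exacts [iEmb_mono H hma, iEmb_mono H hmb]
  · have hSa := (le_iEmb_iff H S a).1 (hS (Set.mem_insert _ _))
    have hSb := (le_iEmb_iff H S b).1 (hS (Set.mem_insert_of_mem _ rfl))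
    exact (le_iEmb_iff H S m).2 fun B => (hm _).2 ⟨hSa B, hSb B⟩

/-- The embedding `i` preserves binary meets: the (pointwise) meet in
`L_QM` of `i(𝒜₁,P₁)` and `i(𝒜₂,P₂)` is `i((𝒜₁,P₁) ⊓ (𝒜₂,P₂))`, where `(𝒜₁,P₁) ⊓ (𝒜₂,P₂)`
is the meet in `S_QM`. -/
theorem iEmb_preserves_meet (a b m : SQM H)
    (hm : ∀ x : SQM H, SQMle H x m ↔ (SQMle H x a ∧ SQMle H x b))
    (M : LQM H) (hM : IsGLB {iEmb H a, iEmb H b} M) :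
    M = iEmb H m :=
  hM.unique (isGLB_iEmb_pair H hm)
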